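/- Every special multiserial algebra A = KQ/I is a quotient of a symmetric special multiserial algebra: the algebra A* = KQ*/I* defined by the defining pair (𝒮, μ) associated to A admits a surjective algebra homomorphism A* → A. -/

import Mathlib

/-!  A model of the path algebra `KQ` of a finite quiver `Q` (vertex set `V`,
arrow set `A`, source and target maps `s t : A → V`), as the quotient of the
free algebra on `V ⊕ A` by the usual path-algebra relations.  -/

open FreeAlgebra

inductive PathRel (K V A : Type) [Field K] [Fintype V] [DecidableEq V] (s t : A → V) :
    FreeAlgebra K (V ⊕ A) → FreeAlgebra K (V ⊕ A) → Prop
  | vtxMul : ∀ v w : V,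
      PathRel K V A s t (ι K (Sum.inl v) * ι K (Sum.inl w))
        (if v = w then ι K (Sum.inl v) else 0)
  | unit : PathRel K V A s t (∑ v : V, ι K (Sum.inl v)) 1
  | src : ∀ a : A,
      PathRel K V A s t (ι K (Sum.inl (s a)) * ι K (Sum.inr a)) (ι K (Sum.inr a))
  | tgt : ∀ a : A,
      PathRel K V A s t (ι K (Sum.inr a) * ι K (Sum.inl (t a))) (ι K (Sum.inr a))

/-- The path algebra `KQ`. -/
abbrev PathAlg (K V A : Type) [Field K] [Fintype V] [DecidableEq V] (s t : A → V) : Type :=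
  RingQuot (PathRel K V A s t)

section

variable (K V A : Type) [Field K] [Fintype V] [DecidableEq V] (s t : A → V)

/-- The element of `KQ` corresponding to an arrow. -/
noncomputable def arrow (a : A) : PathAlg K V A s t :=
  RingQuot.mkAlgHom K (PathRel K V A s t) (ι K (Sum.inr a))

/-- The idempotent of `KQ` corresponding to a vertex (trivial path). -/
noncomputable def vtx (v : V) : PathAlg K V A s t :=
  RingQuot.mkAlgHom K (PathRel K V A s t) (ι K (Sum.inl v))

/-- The element of `KQ` given by a path, recorded as its list of arrows. -/
noncomputable def pathElem (l : List A) : PathAlg K V A s t :=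
  (l.map (arrow K V A s t)).prod

/-- The ideal `J²`, where `J` is the arrow ideal: it is generated by the
products of two arrows (equivalently, by the paths of length 2). -/
def JSqIdeal : TwoSidedIdeal (PathAlg K V A s t) :=
  TwoSidedIdeal.span {x | ∃ a b : A, x = arrow K V A s t a * arrow K V A s t b}

/-- An ideal `I` of `KQ` is admissible if `J^N ⊆ I ⊆ J²` for some `N ≥ 2`;
`J^N ⊆ I` amounts to all paths of length `N` lying in `I`. -/
def Admissible (I : TwoSidedIdeal (PathAlg K V A s t)) : Prop :=
  ∃ N : ℕ, 2 ≤ N ∧ (∀ l : List A, l.length = N → pathElem K V A s t l ∈ I) ∧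
    I ≤ JSqIdeal K V A s t

/-- Condition (M): for every arrow `a` there is at most one arrow `b` with
`ab ∉ I` and at most one arrow `c` with `ca ∉ I`. -/
def ConditionM (I : TwoSidedIdeal (PathAlg K V A s t)) : Prop :=
  ∀ a : A,
    (∀ b b' : A, arrow K V A s t a * arrow K V A s t b ∉ I →
      arrow K V A s t a * arrow K V A s t b' ∉ I → b = b') ∧
    (∀ c c' : A, arrow K V A s t c * arrow K V A s t a ∉ I →
      arrow K V A s t c' * arrow K V A s t a ∉ I → c = c')

/-- `σ : Q₁ → Q₁ ∪ {⋄}` (with `⋄ = none`): `σ a = some b` iff `ab ∉ I`. -/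
def SigmaSpec (I : TwoSidedIdeal (PathAlg K V A s t)) (σ : A → Option A) : Prop :=
  ∀ a b : A, σ a = some b ↔ arrow K V A s t a * arrow K V A s t b ∉ I

/-- `τ : Q₁ → Q₁ ∪ {⋄}` (with `⋄ = none`): `τ a = some c` iff `ca ∉ I`. -/
def TauSpec (I : TwoSidedIdeal (PathAlg K V A s t)) (τ : A → Option A) : Prop :=
  ∀ a c : A, τ a = some c ↔ arrow K V A s t c * arrow K V A s t a ∉ I

end

/-- Iterate of `σ` (extended to `Q₁ ∪ {⋄}` by `σ(⋄) = ⋄`) applied to an arrow: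
`OIter σ n a = σⁿ(a)`. -/
def OIter {A : Type} (σ : A → Option A) (n : ℕ) (a : A) : Option A :=
  (fun o => o.bind σ)^[n] (some a)

/-- A `(σ,τ)`-maximal path `a₁ ⋯ a_r`: `σ(aᵢ) = a_{i+1}`, `σ(a_r) = ⋄`,
`τ(a₁) = ⋄`. -/
def IsMaximalPath {A : Type} (σ τ : A → Option A) (l : List A) : Prop :=
  l ≠ [] ∧ l.Chain' (fun x y => σ x = some y) ∧
    (∀ x ∈ l.getLast?, σ x = none) ∧ (∀ x ∈ l.head?, τ x = none)

/-- The cycle `C_a = a σ(a) ⋯ σ^{m̂_a−1}(a)`, where `m̂_a` is the least positive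
integer with `σ^{m̂_a}(a) = a`:  `l` has entries the iterates of `σ` at `a` and
length the least positive return time of `a` under `σ`. -/
def IsSigmaCycleOf {A : Type} (σ : A → Option A) (a : A) (l : List A) : Prop :=
  l ≠ [] ∧ (∀ i : ℕ, i < l.length → l[i]? = OIter σ i a) ∧
    OIter σ l.length a = some a ∧
    ∀ k : ℕ, 0 < k → k < l.length → OIter σ k a ≠ some a

/-- A list of arrows is composable (i.e. a genuine path) if the target of each
arrow is the source of the next. -/
def Composable {V A : Type} (s t : A → V) (l : List A) : Prop :=
  l.Chain' (fun a b => t a = s b)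

/-- A simple cycle: a nonempty path with the same start and end vertex and no
repeated arrows. -/
def IsSimpleCycle {V A : Type} (s t : A → V) (l : List A) : Prop :=
  l ≠ [] ∧ Composable s t l ∧ (∀ x ∈ l.head?, ∀ y ∈ l.getLast?, t y = s x) ∧ l.Nodup

/-- The path `C^m` for a cycle `C`. -/
def cyclePow {A : Type} (l : List A) (m : ℕ) : List A := (List.replicate m l).flatten

/-- A defining pair `(𝒮, μ)` in the quiver `Q`: a set `𝒮` of simple cycles and
`μ : 𝒮 → ℤ_{>0}` satisfying (D0)–(D4). -/
def IsDefiningPair {V A : Type} (s t : A → V) (S : Set (List A)) (μ : List A → ℕ) : Prop :=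
  (∀ l ∈ S, IsSimpleCycle s t l) ∧
  (∀ l ∈ S, 0 < μ l) ∧
  (∀ l ∈ S, l.length = 1 → 1 < μ l) ∧
  (∀ l ∈ S, ∀ l' : List A, l.IsRotated l' → l' ∈ S) ∧
  (∀ l ∈ S, ∀ l' ∈ S, l.IsRotated l' → μ l = μ l') ∧
  (∀ a : A, ∃ l ∈ S, a ∈ l) ∧
  (∀ l ∈ S, ∀ l' ∈ S, (∃ a : A, a ∈ l ∧ a ∈ l') → l.IsRotated l')

/-- The set of relations of Types 1, 2 and 3 attached to a defining pair:
Type 1: `C^{μ(C)} − C'^{μ(C')}` for `C, C' ∈ 𝒮` cycles at the same vertex;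
Type 2: `C^{μ(C)} a` for `C ∈ 𝒮` with first arrow `a`;
Type 3: `ab` for arrows `a, b` with `ab` not a subpath of any `C^s`, `C ∈ 𝒮`. -/
def RelSet (K V A : Type) [Field K] [Fintype V] [DecidableEq V] (s t : A → V)
    (S : Set (List A)) (μ : List A → ℕ) : Set (PathAlg K V A s t) :=
  {x | ∃ l ∈ S, ∃ l' ∈ S, ∃ a ∈ l.head?, ∃ a' ∈ l'.head?, s a = s a' ∧
      x = pathElem K V A s t (cyclePow l (μ l)) - pathElem K V A s t (cyclePow l' (μ l'))} ∪
  {x | ∃ l ∈ S, ∃ a ∈ l.head?, x = pathElem K V A s t (cyclePow l (μ l) ++ [a])} ∪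
  {x | ∃ a b : A, x = arrow K V A s t a * arrow K V A s t b ∧
      ∀ l ∈ S, ∀ m : ℕ, ¬ [a, b] <:+: cyclePow l m}

/-- The ideal of relations of a defining pair. -/
def DefIdeal (K V A : Type) [Field K] [Fintype V] [DecidableEq V] (s t : A → V)
    (S : Set (List A)) (μ : List A → ℕ) : TwoSidedIdeal (PathAlg K V A s t) :=
  TwoSidedIdeal.span (RelSet K V A s t S μ)

/-- The relation whose `RingQuot` is the algebra `KQ/I` defined by a defining
pair, `I` generated by the Type 1, 2, 3 relations. -/
def QRel (K V A : Type) [Field K] [Fintype V] [DecidableEq V] (s t : A → V)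
    (S : Set (List A)) (μ : List A → ℕ) :
    PathAlg K V A s t → PathAlg K V A s t → Prop :=
  fun x y => x ∈ RelSet K V A s t S μ ∧ y = 0

/-- The set ℳ of `(σ,τ)`-maximal paths. -/
def MaxPath {A : Type} (σ τ : A → Option A) : Type := {l : List A // IsMaximalPath σ τ l}

/-- The arrows of the quiver `Q*`: the arrows of `Q` together with one new
arrow `a_M` for each `(σ,τ)`-maximal path `M`. -/
def AStar {A : Type} (σ τ : A → Option A) : Type := A ⊕ MaxPath σ τ

/-- Source map of `Q*`: `a_M` starts at `t(M)`. -/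
def sStar {V A : Type} (s t : A → V) (σ τ : A → Option A) : AStar σ τ → V
  | Sum.inl a => s a
  | Sum.inr M => t (M.val.getLast M.prop.1)

/-- Target map of `Q*`: `a_M` ends at `s(M)`. -/
def tStar {V A : Type} (s t : A → V) (σ τ : A → Option A) : AStar σ τ → V
  | Sum.inl a => t a
  | Sum.inr M => s (M.val.head M.prop.1)

/-- `𝒮 = 𝒞 ∪ ℳ*` in `Q*`: the cycles `C_a`, together with all cyclic
permutations of the cycles `M a_M` for `M ∈ ℳ`. -/
def SStar {A : Type} (σ τ : A → Option A) : Set (List (AStar σ τ)) :=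
  {L | ∃ (c : A) (l : List A), IsSigmaCycleOf σ c l ∧ L = l.map Sum.inl} ∪
  {L | ∃ M : MaxPath σ τ, (M.val.map Sum.inl ++ [Sum.inr M]).IsRotated L}


/-! The map `F : KQ* → KQ` fixing `Q` and killing the new arrows `a_M` has the inclusion
`KQ → KQ*` as a section, so it is surjective, and it remains to see `F(I*) ⊆ I`. Relations of
Types 1 and 2 are paths of length at least `N`: they lie in `I` or pass through some `a_M`.
A Type 3 relation `ab` with `ab ∉ I` would have `σ(a) = b`. Since `σ` and `τ` are mutually
inverse partial injections of the finite set `Q₁`, the `σ`-orbit of `a` is either the cycle `C_a`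
or lies on a maximal path `M`, so `ab` is a subpath of `C_a²` or of `M a_M`, and no relation
of Type 3 was imposed on it. -/

open List

section Orbit

variable {α : Type} {σ τ : α → Option α}

@[simp] lemma oIter_zero (σ : α → Option α) (a : α) : OIter σ 0 a = some a := rfl

lemma iterate_bind_eq_bind_oIter (σ : α → Option α) (n : ℕ) (o : Option α) :
    (fun o => o.bind σ)^[n] o = o.bind (OIter σ n) := by
  cases o with
  | none =>
    induction n with
    | zero => rfl
    | succ n ih => rw [Function.iterate_succ_apply', ih]; rfl
  | some a => rfl

lemma oIter_add (σ : α → Option α) (m n : ℕ) (a : α) :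
    OIter σ (m + n) a = (OIter σ n a).bind (OIter σ m) := by
  rw [OIter, Function.iterate_add_apply, iterate_bind_eq_bind_oIter]
  rfl

lemma oIter_succ (σ : α → Option α) (n : ℕ) (a : α) :
    OIter σ (n + 1) a = (OIter σ n a).bind σ := by
  rw [add_comm, oIter_add]
  rfl

lemma oIter_succ' (σ : α → Option α) (n : ℕ) (a : α) :
    OIter σ (n + 1) a = (σ a).bind (OIter σ n) :=
  oIter_add σ n 1 a

lemma oIter_symm (hinv : ∀ x y, σ x = some y ↔ τ y = some x) {n : ℕ} {x y : α}
    (h : OIter σ n x = some y) : OIter τ n y = some x := by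
  induction n generalizing y with
  | zero => simpa [eq_comm] using h
  | succ n ih =>
    obtain ⟨z, hz, hzy⟩ := Option.bind_eq_some_iff.1 ((oIter_succ σ n x).symm.trans h)
    rw [oIter_succ', (hinv z y).1 hzy, Option.bind_some, ih hz]

lemma exists_oIter_eq_some_of_eq_none {n : ℕ} {a : α} (h : OIter σ n a = none) :
    ∃ k c, OIter σ k a = some c ∧ σ c = none := by
  induction n with
  | zero => simp at h
  | succ n ih =>
    rw [oIter_succ] at h
    cases hn : OIter σ n a with
    | none => exact ih hn
    | some c => exact ⟨n, c, hn, by simpa [hn] using h⟩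

lemma oIter_sub_eq_self (hinj : ∀ x y z, σ x = some z → σ y = some z → x = y) {a e : α}
    {i j : ℕ} (hi : OIter σ i a = some e) (hj : OIter σ j a = some e) (hij : i ≤ j) :
    OIter σ (j - i) a = some a := by
  induction i generalizing j e with
  | zero =>
    obtain rfl : a = e := Option.some.inj hi
    simpa using hj
  | succ i ih =>
    obtain ⟨j, rfl⟩ : ∃ j', j = j' + 1 := ⟨j - 1, by omega⟩
    rw [oIter_succ, Option.bind_eq_some_iff] at hi hj
    obtain ⟨x, hx, hxe⟩ := hi
    obtain ⟨y, hy, hye⟩ := hj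
    rw [Nat.add_sub_add_right]
    exact ih hx (hinj y x e hye hxe ▸ hy) (by omega)

lemma exists_oIter_eq_self_or_eq_none [Finite α]
    (hinj : ∀ x y z, σ x = some z → σ y = some z → x = y) (a : α) :
    (∃ k, 0 < k ∧ OIter σ k a = some a) ∨ ∃ n, OIter σ n a = none := by
  by_contra! h
  obtain ⟨hper, hdef⟩ := h
  choose g hg using fun n => Option.ne_none_iff_exists'.1 (hdef n)
  obtain ⟨i, j, hne, hgij⟩ := Finite.exists_ne_map_eq_of_infinite g
  wlog hlt : i < j generalizing i j
  · exact this j i hne.symm hgij.symm (by omega)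
  exact hper (j - i) (by omega) (oIter_sub_eq_self hinj (hg i) (hgij ▸ hg j) hlt.le)

/-- The path `a σ(a) σ²(a) ⋯` of length `n`, cut short where `σ` is undefined. -/
def orbit (σ : α → Option α) : ℕ → α → List α
  | 0, _ => []
  | n + 1, a => a :: (σ a).elim [] (orbit σ n)

lemma orbit_succ_of_eq_some {n : ℕ} {a b : α} (h : σ a = some b) :
    orbit σ (n + 1) a = a :: orbit σ n b := by
  simp [orbit, h]

lemma orbit_succ_of_eq_none {n : ℕ} {a : α} (h : σ a = none) : orbit σ (n + 1) a = [a] := by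
  simp [orbit, h]

lemma getElem?_orbit {n i : ℕ} {a : α} (hi : i < n) : (orbit σ n a)[i]? = OIter σ i a := by
  induction n generalizing a i with
  | zero => omega
  | succ n ih =>
    cases i with
    | zero => rfl
    | succ i =>
      rw [oIter_succ']
      cases h : σ a with
      | none => simp [orbit_succ_of_eq_none h]
      | some b =>
        rw [orbit_succ_of_eq_some h, getElem?_cons_succ, ih (by omega), Option.bind_some]

lemma length_orbit {n : ℕ} {a c : α} (h : OIter σ n a = some c) : (orbit σ n a).length = n := by
  induction n generalizing a with
  | zero => rfl
  | succ n ih =>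
    rw [oIter_succ'] at h
    cases hσ : σ a with
    | none => simp [hσ] at h
    | some b =>
      rw [hσ, Option.bind_some] at h
      rw [orbit_succ_of_eq_some hσ, length_cons, ih h]

lemma orbit_add {k n : ℕ} {a c : α} (h : OIter σ k c = some a) :
    orbit σ (k + n) c = orbit σ k c ++ orbit σ n a := by
  induction k generalizing c with
  | zero => cases h; simp [orbit]
  | succ k ih =>
    obtain ⟨d, hd, hk⟩ := Option.bind_eq_some_iff.1 ((oIter_succ' σ k c).symm.trans h)
    rw [show k + 1 + n = k + n + 1 by omega, orbit_succ_of_eq_some hd, orbit_succ_of_eq_some hd,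
      ih hk, cons_append]

lemma prefix_orbit {n : ℕ} {a b : α} (h : σ a = some b) : [a, b] <+: orbit σ (n + 2) a :=
  ⟨(σ b).elim [] (orbit σ n), by rw [orbit_succ_of_eq_some h]; rfl⟩

lemma isChain_orbit (n : ℕ) (a : α) : (orbit σ n a).IsChain (fun x y => σ x = some y) := by
  induction n generalizing a with
  | zero => exact .nil
  | succ n ih =>
    cases h : σ a with
    | none => rw [orbit_succ_of_eq_none h]; exact .singleton a
    | some b =>
      rw [orbit_succ_of_eq_some h]
      cases n with
      | zero => exact .singleton a
      | succ n =>
        have hb := ih b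
        rw [orbit] at hb ⊢
        exact .cons_cons h hb

lemma getLast?_orbit {n : ℕ} {a : α} (h : OIter σ n a = none) :
    ∀ x ∈ (orbit σ n a).getLast?, σ x = none := by
  induction n generalizing a with
  | zero => simp at h
  | succ n ih =>
    rw [oIter_succ'] at h
    cases hσ : σ a with
    | none => simp [orbit_succ_of_eq_none hσ, hσ]
    | some b =>
      rw [hσ, Option.bind_some] at h
      cases n with
      | zero => simp at h
      | succ n =>
        rw [orbit_succ_of_eq_some hσ]
        show ∀ x ∈ (a :: b :: (σ b).elim [] (orbit σ n)).getLast?, σ x = none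
        rw [getLast?_cons_cons]
        exact ih h

end Orbit

section CyclePow

variable {α β : Type}

lemma cyclePow_map (g : α → β) (l : List α) (m : ℕ) :
    cyclePow (l.map g) m = (cyclePow l m).map g := by
  rw [cyclePow, cyclePow, map_flatten, map_replicate]

lemma length_cyclePow (l : List α) (m : ℕ) : (cyclePow l m).length = m * l.length := by
  simp [cyclePow, length_flatten, sum_replicate]

lemma cyclePow_one (l : List α) : cyclePow l 1 = l := by
  simp [cyclePow]

lemma cyclePow_two (l : List α) : cyclePow l 2 = l ++ l := by
  simp [cyclePow]

end CyclePow

section Arrows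

variable {A : Type} {σ τ : A → Option A} {a b : A}

lemma exists_isSigmaCycleOf_infix (hper : ∃ k, 0 < k ∧ OIter σ k a = some a)
    (hab : σ a = some b) : ∃ l, IsSigmaCycleOf σ a l ∧ [a, b] <:+: cyclePow l 2 := by
  classical
  obtain ⟨hp, hpa⟩ := Nat.find_spec hper
  set p := Nat.find hper
  have hlen : (orbit σ p a).length = p := length_orbit hpa
  refine ⟨orbit σ p a, ⟨?_, fun i hi => getElem?_orbit (hlen ▸ hi), by rwa [hlen], ?_⟩, ?_⟩
  · rw [← length_pos_iff, hlen]
    exact hp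
  · rw [hlen]
    exact fun k hk hkp hka => Nat.find_min hper hkp ⟨hk, hka⟩
  · obtain ⟨n, hn⟩ : ∃ n, p + p = n + 2 := ⟨p + p - 2, by omega⟩
    rw [cyclePow_two, ← orbit_add hpa, hn]
    exact (prefix_orbit hab).isInfix

lemma injective_of_partialInverse (hinv : ∀ x y, σ x = some y ↔ τ y = some x) :
    ∀ x y z, σ x = some z → σ y = some z → x = y :=
  fun x y z hx hy => Option.some.inj (((hinv x z).1 hx).symm.trans ((hinv y z).1 hy))

/-- An arrow on no `σ`-cycle has a finite `σ`-orbit in both directions (`τ` walks backwards),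
and the two ends bound a maximal path through it. -/
lemma exists_isMaximalPath_infix [Finite A] (hinv : ∀ x y, σ x = some y ↔ τ y = some x)
    (hper : ¬ ∃ k, 0 < k ∧ OIter σ k a = some a) (hab : σ a = some b) :
    ∃ M, IsMaximalPath σ τ M ∧ [a, b] <:+: M := by
  have hinv' : ∀ x y, τ x = some y ↔ σ y = some x := fun x y => (hinv y x).symm
  obtain ⟨n, hn⟩ :=
    (exists_oIter_eq_self_or_eq_none (injective_of_partialInverse hinv) a).resolve_left hper
  obtain ⟨m, hm⟩ :=
    (exists_oIter_eq_self_or_eq_none (injective_of_partialInverse hinv') a).resolve_left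
      fun ⟨k, hk, hka⟩ => hper ⟨k, hk, oIter_symm hinv' hka⟩
  obtain ⟨k, c, hc, hτc⟩ := exists_oIter_eq_some_of_eq_none hm
  have hca : OIter σ k c = some a := oIter_symm hinv' hc
  obtain ⟨n, rfl⟩ : ∃ n', n = n' + 2 := by
    match n, hn with
    | 0, h | 1, h => simp [oIter_succ', hab] at h
    | n + 2, _ => exact ⟨n, rfl⟩
  have hsplit := orbit_add (n := n + 2) hca
  refine ⟨orbit σ (k + (n + 2)) c, ⟨?_, isChain_orbit _ _, getLast?_orbit ?_, ?_⟩, ?_⟩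
  · simp [orbit]
  · rwa [add_comm, oIter_add, hca, Option.bind_some]
  · simpa [← add_assoc, orbit] using hτc
  · rw [hsplit]
    exact (prefix_orbit hab).isInfix.trans (suffix_append _ _).isInfix

lemma exists_mem_sStar_infix_cyclePow [Finite A] (hinv : ∀ x y, σ x = some y ↔ τ y = some x)
    (hab : σ a = some b) :
    ∃ l ∈ SStar σ τ, ∃ m, [Sum.inl a, Sum.inl b] <:+: cyclePow l m := by
  by_cases hper : ∃ k, 0 < k ∧ OIter σ k a = some a
  · obtain ⟨l, hl, hinf⟩ := exists_isSigmaCycleOf_infix hper hab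
    refine ⟨(l.map Sum.inl : List (AStar σ τ)), Or.inl ⟨a, l, hl, rfl⟩, 2, ?_⟩
    have h := hinf.map (Sum.inl : A → AStar σ τ)
    rwa [← cyclePow_map] at h
  · obtain ⟨M, hM, hinf⟩ := exists_isMaximalPath_infix hinv hper hab
    refine ⟨(M.map Sum.inl ++ [Sum.inr ⟨M, hM⟩] : List (AStar σ τ)),
      Or.inr ⟨⟨M, hM⟩, IsRotated.refl _⟩, 1, ?_⟩
    have h := (hinf.map (Sum.inl : A → AStar σ τ)).trans
      (prefix_append _ [(Sum.inr ⟨M, hM⟩ : AStar σ τ)]).isInfix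
    rwa [← cyclePow_one (_ ++ _)] at h

end Arrows

section PathAlgebra

variable {K V A : Type} [Field K] [Fintype V] [DecidableEq V] {s t : A → V}

lemma vtx_mul_vtx (v w : V) :
    vtx K V A s t v * vtx K V A s t w = if v = w then vtx K V A s t v else 0 := by
  have h := RingQuot.mkAlgHom_rel K (PathRel.vtxMul (K := K) (s := s) (t := t) v w)
  split_ifs at h ⊢ <;> simpa [vtx] using h

lemma sum_vtx : ∑ v : V, vtx K V A s t v = 1 := by
  simpa [vtx] using RingQuot.mkAlgHom_rel K (PathRel.unit (K := K) (V := V) (s := s) (t := t))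

lemma vtx_mul_arrow (a : A) : vtx K V A s t (s a) * arrow K V A s t a = arrow K V A s t a := by
  simpa [vtx, arrow] using RingQuot.mkAlgHom_rel K (PathRel.src (K := K) (V := V) (t := t) a)

lemma arrow_mul_vtx (a : A) : arrow K V A s t a * vtx K V A s t (t a) = arrow K V A s t a := by
  simpa [vtx, arrow] using RingQuot.mkAlgHom_rel K (PathRel.tgt (K := K) (V := V) (s := s) a)

variable {B : Type} [Semiring B] [Algebra K B]

lemma map_pathElem (g : PathAlg K V A s t →ₐ[K] B) (l : List A) :
    g (pathElem K V A s t l) = (l.map fun a => g (arrow K V A s t a)).prod := by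
  rw [pathElem, map_list_prod, map_map]
  rfl

namespace PathAlg

noncomputable def lift (fv : V → B) (fa : A → B)
    (hvv : ∀ v w, fv v * fv w = if v = w then fv v else 0) (hsum : ∑ v, fv v = 1)
    (hs : ∀ a, fv (s a) * fa a = fa a) (ht : ∀ a, fa a * fv (t a) = fa a) :
    PathAlg K V A s t →ₐ[K] B :=
  RingQuot.liftAlgHom K ⟨FreeAlgebra.lift K (Sum.elim fv fa), by
    rintro _ _ (⟨v, w⟩ | _ | ⟨a⟩ | ⟨a⟩)
    · rw [map_mul, apply_ite (FreeAlgebra.lift K (Sum.elim fv fa)), map_zero]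
      simpa using hvv v w
    · simpa using hsum
    · simpa using hs a
    · simpa using ht a⟩

variable {fv : V → B} {fa : A → B}
  {hvv : ∀ v w, fv v * fv w = if v = w then fv v else 0} {hsum : ∑ v, fv v = 1}
  {hs : ∀ a, fv (s a) * fa a = fa a} {ht : ∀ a, fa a * fv (t a) = fa a}

@[simp] lemma lift_vtx (v : V) : lift fv fa hvv hsum hs ht (vtx K V A s t v) = fv v := by
  rw [lift, vtx, RingQuot.liftAlgHom_mkAlgHom_apply]
  exact FreeAlgebra.lift_ι_apply _ _

@[simp] lemma lift_arrow (a : A) : lift fv fa hvv hsum hs ht (arrow K V A s t a) = fa a := by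
  rw [lift, arrow, RingQuot.liftAlgHom_mkAlgHom_apply]
  exact FreeAlgebra.lift_ι_apply _ _

lemma algHom_ext {f g : PathAlg K V A s t →ₐ[K] B}
    (hv : ∀ v, f (vtx K V A s t v) = g (vtx K V A s t v))
    (ha : ∀ a, f (arrow K V A s t a) = g (arrow K V A s t a)) : f = g := by
  refine RingQuot.ringQuot_ext' K f g (FreeAlgebra.hom_ext (funext ?_))
  rintro (v | a)
  · exact hv v
  · exact ha a

end PathAlg

end PathAlgebra

lemma List.eq_map_inl_or_exists_inr_mem {α β : Type} :
    ∀ L : List (α ⊕ β), (∃ l : List α, L = l.map Sum.inl) ∨ ∃ b, Sum.inr b ∈ L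
  | [] => .inl ⟨[], rfl⟩
  | .inl a :: L => (eq_map_inl_or_exists_inr_mem L).imp
      (fun ⟨l, h⟩ => ⟨a :: l, by rw [h, map_cons]⟩) fun ⟨b, h⟩ => ⟨b, mem_cons_of_mem _ h⟩
  | .inr b :: _ => .inr ⟨b, mem_cons_self⟩

section StarQuiver

variable (K V : Type) {A : Type} [Field K] [Fintype V] [DecidableEq V] (s t : A → V)
  (σ τ : A → Option A)

/-- The map `F` of the construction. -/
noncomputable def eraseMaxPathArrows :
    PathAlg K V (AStar σ τ) (sStar s t σ τ) (tStar s t σ τ) →ₐ[K] PathAlg K V A s t :=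
  PathAlg.lift (vtx K V A s t) (Sum.elim (arrow K V A s t) 0) vtx_mul_vtx sum_vtx
    (by rintro (a | M); exacts [vtx_mul_arrow a, mul_zero _])
    (by rintro (a | M); exacts [arrow_mul_vtx a, zero_mul _])

noncomputable def includeInStar :
    PathAlg K V A s t →ₐ[K] PathAlg K V (AStar σ τ) (sStar s t σ τ) (tStar s t σ τ) :=
  PathAlg.lift (vtx K V _ _ _) (fun a => arrow K V _ _ _ (Sum.inl a)) vtx_mul_vtx sum_vtx
    (fun a => vtx_mul_arrow (s := sStar s t σ τ) (Sum.inl a))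
    (fun a => arrow_mul_vtx (t := tStar s t σ τ) (Sum.inl a))

variable {K V s t σ τ}

@[simp] lemma eraseMaxPathArrows_vtx (v : V) :
    eraseMaxPathArrows K V s t σ τ (vtx K V _ _ _ v) = vtx K V A s t v :=
  PathAlg.lift_vtx v

@[simp] lemma eraseMaxPathArrows_arrow_inl (a : A) :
    eraseMaxPathArrows K V s t σ τ (arrow K V _ _ _ (Sum.inl a)) = arrow K V A s t a :=
  PathAlg.lift_arrow (Sum.inl a)

@[simp] lemma eraseMaxPathArrows_arrow_inr (M : MaxPath σ τ) :
    eraseMaxPathArrows K V s t σ τ (arrow K V _ _ _ (Sum.inr M)) = 0 :=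
  PathAlg.lift_arrow (Sum.inr M)

@[simp] lemma includeInStar_vtx (v : V) :
    includeInStar K V s t σ τ (vtx K V A s t v) = vtx K V _ _ _ v :=
  PathAlg.lift_vtx v

@[simp] lemma includeInStar_arrow (a : A) :
    includeInStar K V s t σ τ (arrow K V A s t a) =
      arrow K V (AStar σ τ) (sStar s t σ τ) (tStar s t σ τ) (Sum.inl a) :=
  PathAlg.lift_arrow a

lemma eraseMaxPathArrows_comp_includeInStar :
    (eraseMaxPathArrows K V s t σ τ).comp (includeInStar K V s t σ τ) = AlgHom.id K _ :=
  PathAlg.algHom_ext (fun v => by simp) (fun a => by simp)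

lemma eraseMaxPathArrows_surjective : Function.Surjective (eraseMaxPathArrows K V s t σ τ) :=
  fun x => ⟨includeInStar K V s t σ τ x, by
    rw [← AlgHom.comp_apply, eraseMaxPathArrows_comp_includeInStar, AlgHom.id_apply]⟩

lemma eraseMaxPathArrows_pathElem_map_inl (l : List A) :
    eraseMaxPathArrows K V s t σ τ (pathElem K V _ _ _ (l.map Sum.inl)) =
      pathElem K V A s t l := by
  induction l with
  | nil => exact map_one _
  | cons a l ih =>
    exact (map_mul _ _ _).trans (congrArg₂ (· * ·) (eraseMaxPathArrows_arrow_inl a) ih)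

lemma eraseMaxPathArrows_pathElem_mem {I : TwoSidedIdeal (PathAlg K V A s t)} {N : ℕ}
    (hNin : ∀ l : List A, N ≤ l.length → pathElem K V A s t l ∈ I)
    {L : List (AStar σ τ)} (hL : N ≤ L.length) :
    eraseMaxPathArrows K V s t σ τ (pathElem K V _ _ _ L) ∈ I := by
  rcases eq_map_inl_or_exists_inr_mem L with ⟨l, rfl⟩ | ⟨M, hM⟩
  · have h := hNin l (hL.trans_eq (length_map _))
    rwa [← eraseMaxPathArrows_pathElem_map_inl (σ := σ) (τ := τ)] at h
  · have h0 : eraseMaxPathArrows K V s t σ τ (pathElem K V _ _ _ L) = 0 := by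
      rw [map_pathElem]
      exact prod_eq_zero (mem_map.2 ⟨Sum.inr M, hM, eraseMaxPathArrows_arrow_inr M⟩)
    rw [h0]
    exact I.zero_mem

end StarQuiver

lemma RingQuot.mkAlgHom_eq_zero_of_mem {R B : Type} [CommSemiring R] [Ring B] [Algebra R B]
    {I : TwoSidedIdeal B} {x : B} (hx : x ∈ I) :
    RingQuot.mkAlgHom R (fun x y : B => x - y ∈ I) x = 0 := by
  have h := mkAlgHom_rel R (s := fun x y : B => x - y ∈ I) (show x - 0 ∈ I by rwa [sub_zero])
  rwa [map_zero] at h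

section StarRelations

variable {K V A : Type} [Field K] [Fintype V] [DecidableEq V] {s t : A → V}
  {σ τ : A → Option A} {I : TwoSidedIdeal (PathAlg K V A s t)}

lemma eraseMaxPathArrows_mem_of_mem_relSet [Finite A] (hσ : SigmaSpec K V A s t I σ)
    (hτ : TauSpec K V A s t I τ) {N : ℕ}
    (hNin : ∀ l : List A, N ≤ l.length → pathElem K V A s t l ∈ I) {x}
    (hx : x ∈ RelSet K V (AStar σ τ) (sStar s t σ τ) (tStar s t σ τ) (SStar σ τ) fun _ => N) :
    eraseMaxPathArrows K V s t σ τ x ∈ I := by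
  have hcyc {l : List (AStar σ τ)} {a} (ha : a ∈ l.head?) : N ≤ (cyclePow l N).length := by
    rw [length_cyclePow]
    exact Nat.le_mul_of_pos_right N (length_pos_of_mem (mem_of_mem_head? ha))
  rcases hx with
    (⟨l, -, l', -, a, ha, a', ha', -, rfl⟩ | ⟨l, -, a, ha, rfl⟩) | ⟨a, b, rfl, hnotsub⟩
  · rw [map_sub]
    exact I.sub_mem (eraseMaxPathArrows_pathElem_mem hNin (hcyc ha))
      (eraseMaxPathArrows_pathElem_mem hNin (hcyc ha'))
  · exact eraseMaxPathArrows_pathElem_mem hNin ((hcyc ha).trans (by simp))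
  · rcases a with a | M
    · rcases b with b | M
      · rw [map_mul, eraseMaxPathArrows_arrow_inl, eraseMaxPathArrows_arrow_inl]
        by_contra hab
        have hinv : ∀ x y, σ x = some y ↔ τ y = some x := fun x y => (hσ x y).trans (hτ y x).symm
        obtain ⟨l, hl, m, hinf⟩ := exists_mem_sStar_infix_cyclePow hinv ((hσ a b).2 hab)
        exact hnotsub l hl m hinf
      · rw [map_mul, eraseMaxPathArrows_arrow_inr, mul_zero]
        exact I.zero_mem
    · rw [map_mul, eraseMaxPathArrows_arrow_inr, zero_mul]
      exact I.zero_mem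

end StarRelations

theorem quotient_of_symmetric_special_multiserial_general
    (K V A : Type) [Field K] [Fintype V] [DecidableEq V] [Fintype A]
    (s t : A → V) (I : TwoSidedIdeal (PathAlg K V A s t))
    (σ τ : A → Option A) (hσ : SigmaSpec K V A s t I σ) (hτ : TauSpec K V A s t I τ)
    (N : ℕ)
    (hNin : ∀ l : List A, N ≤ l.length → pathElem K V A s t l ∈ I) :
    ∃ φ : RingQuot (QRel K V (AStar σ τ) (sStar s t σ τ) (tStar s t σ τ) (SStar σ τ)
            (fun _ => N)) →ₐ[K]
          RingQuot (fun x y : PathAlg K V A s t => x - y ∈ I),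
      Function.Surjective φ ∧
      (∀ a : A,
        φ (RingQuot.mkAlgHom K
            (QRel K V (AStar σ τ) (sStar s t σ τ) (tStar s t σ τ) (SStar σ τ) (fun _ => N))
            (arrow K V (AStar σ τ) (sStar s t σ τ) (tStar s t σ τ) (Sum.inl a))) =
          RingQuot.mkAlgHom K (fun x y : PathAlg K V A s t => x - y ∈ I)
            (arrow K V A s t a)) ∧
      (∀ M : MaxPath σ τ,
        φ (RingQuot.mkAlgHom K
            (QRel K V (AStar σ τ) (sStar s t σ τ) (tStar s t σ τ) (SStar σ τ) (fun _ => N))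
            (arrow K V (AStar σ τ) (sStar s t σ τ) (tStar s t σ τ) (Sum.inr M))) = 0) ∧
      (∀ v : V,
        φ (RingQuot.mkAlgHom K
            (QRel K V (AStar σ τ) (sStar s t σ τ) (tStar s t σ τ) (SStar σ τ) (fun _ => N))
            (vtx K V (AStar σ τ) (sStar s t σ τ) (tStar s t σ τ) v)) =
          RingQuot.mkAlgHom K (fun x y : PathAlg K V A s t => x - y ∈ I)
            (vtx K V A s t v)) := by
  let F := eraseMaxPathArrows K V s t σ τ
  let mkI := RingQuot.mkAlgHom K fun x y : PathAlg K V A s t => x - y ∈ I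
  have hF : ∀ ⦃x y⦄, QRel K V (AStar σ τ) (sStar s t σ τ) (tStar s t σ τ) (SStar σ τ)
      (fun _ => N) x y → mkI.comp F x = mkI.comp F y := by
    rintro x _ ⟨hx, rfl⟩
    rw [map_zero, AlgHom.comp_apply]
    exact RingQuot.mkAlgHom_eq_zero_of_mem (eraseMaxPathArrows_mem_of_mem_relSet hσ hτ hNin hx)
  refine ⟨RingQuot.liftAlgHom K ⟨mkI.comp F, hF⟩, fun y => ?_, fun a => ?_, fun M => ?_,
    fun v => ?_⟩
  · obtain ⟨x, rfl⟩ := RingQuot.mkAlgHom_surjective K _ y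
    obtain ⟨z, rfl⟩ := eraseMaxPathArrows_surjective (σ := σ) (τ := τ) x
    exact ⟨RingQuot.mkAlgHom K _ z, RingQuot.liftAlgHom_mkAlgHom_apply _ _ _ _⟩
  all_goals rw [RingQuot.liftAlgHom_mkAlgHom_apply, AlgHom.comp_apply]
  · rw [eraseMaxPathArrows_arrow_inl]
  · rw [eraseMaxPathArrows_arrow_inr, map_zero]
  · rw [eraseMaxPathArrows_vtx]

/-- Every special multiserial algebra `A = KQ/I` is a
quotient of a symmetric special multiserial algebra: the algebra
`A* = KQ*/I*` defined by the defining pair `(𝒮, μ)` associated to `A` admits a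
surjective algebra homomorphism `A* → A`, induced by the map fixing the
vertices and arrows of `Q` and sending each new arrow `a_M` to `0`. -/
theorem quotient_of_symmetric_special_multiserial
    (K V A : Type) [Field K] [Fintype V] [DecidableEq V] [Fintype A]
    (s t : A → V) (I : TwoSidedIdeal (PathAlg K V A s t))
    (hAdm : Admissible K V A s t I) (hM : ConditionM K V A s t I)
    (σ τ : A → Option A) (hσ : SigmaSpec K V A s t I σ) (hτ : TauSpec K V A s t I τ)
    (N : ℕ) (hN2 : 2 ≤ N)
    (hNin : ∀ l : List A, N ≤ l.length → pathElem K V A s t l ∈ I)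
    (hNmin : ∀ N' : ℕ, 2 ≤ N' → (∀ l : List A, N' ≤ l.length → pathElem K V A s t l ∈ I) →
      N ≤ N') :
    ∃ φ : RingQuot (QRel K V (AStar σ τ) (sStar s t σ τ) (tStar s t σ τ) (SStar σ τ)
            (fun _ => N)) →ₐ[K]
          RingQuot (fun x y : PathAlg K V A s t => x - y ∈ I),
      Function.Surjective φ ∧
      (∀ a : A,
        φ (RingQuot.mkAlgHom K
            (QRel K V (AStar σ τ) (sStar s t σ τ) (tStar s t σ τ) (SStar σ τ) (fun _ => N))
            (arrow K V (AStar σ τ) (sStar s t σ τ) (tStar s t σ τ) (Sum.inl a))) =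
          RingQuot.mkAlgHom K (fun x y : PathAlg K V A s t => x - y ∈ I)
            (arrow K V A s t a)) ∧
      (∀ M : MaxPath σ τ,
        φ (RingQuot.mkAlgHom K
            (QRel K V (AStar σ τ) (sStar s t σ τ) (tStar s t σ τ) (SStar σ τ) (fun _ => N))
            (arrow K V (AStar σ τ) (sStar s t σ τ) (tStar s t σ τ) (Sum.inr M))) = 0) ∧
      (∀ v : V,
        φ (RingQuot.mkAlgHom K
            (QRel K V (AStar σ τ) (sStar s t σ τ) (tStar s t σ τ) (SStar σ τ) (fun _ => N))
            (vtx K V (AStar σ τ) (sStar s t σ τ) (tStar s t σ τ) v)) =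
          RingQuot.mkAlgHom K (fun x y : PathAlg K V A s t => x - y ∈ I)
            (vtx K V A s t v)) :=
  quotient_of_symmetric_special_multiserial_general K V A s t I σ τ hσ hτ N hNin
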